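/- Let A_7' be the sublattice of E_8 generated by -e_1 - e_2 and e_i - e_{i+1} for i = 2,...,7. Then the orthogonal complement of A_7' in E_8 is generated by j - 2e_1, a vector of norm 8; consequently, no automorphism of E_8 in the Weyl group maps the standard copy A_7 (integer vectors with zero coordinate sum) onto A_7'. -/

import Mathlib

open Matrix

/-- The standard basis vector `e_k` of `ℝ^N`. -/
def e {N : ℕ} (k : Fin N) : Fin N → ℝ := fun j => if j = k then 1 else 0

/-- The root lattice `D_8` (as a set): integer vectors with even coordinate sum. -/
def D8set : Set (Fin 8 → ℝ) :=
  {v | (∀ i, ∃ z : ℤ, v i = (z : ℝ)) ∧ ∃ k : ℤ, ∑ i, v i = 2 * (k : ℝ)}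

/-- The all-ones vector `j` in `ℝ^8`. -/
def jv : Fin 8 → ℝ := fun _ => 1

/-- The root lattice `E_8` (as a set): `E_8 = D_8 ∪ (j/2 + D_8)`. -/
def E8set : Set (Fin 8 → ℝ) :=
  D8set ∪ {v | ∃ w ∈ D8set, v = (2 : ℝ)⁻¹ • jv + w}

/-- The copy of `A_7` inside `E_8` (as a set): integer vectors with coordinate sum `0`. -/
def A7set : Set (Fin 8 → ℝ) :=
  {v | (∀ i, ∃ z : ℤ, v i = (z : ℝ)) ∧ ∑ i, v i = 0}


/-- The generators `-e_1 - e_2` and `e_i - e_{i+1}` (`i = 2, …, 7`) of the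
sublattice `A_7'` of `E_8` (all `0`-indexed below). -/
def A7'gens : Set (Fin 8 → ℝ) :=
  insert (-(e 0) - e 1)
    {v | ∃ k : Fin 6, v = e ⟨(k : ℕ) + 1, by have := k.isLt; omega⟩ -
      e ⟨(k : ℕ) + 2, by have := k.isLt; omega⟩}

/-!
`j/2` lies in `E_8` and is orthogonal to `A_7`, with norm `2`. The orthogonality conditions
against the generators of `A_7'` force `v = c (j - 2e_1)`, and membership in `E_8` forces
`c ∈ ℤ` (for `c ∈ 1/2 + ℤ` the coordinate sum `6c` would be odd). An isometry of `E_8`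
taking `A_7` onto `A_7'` would send `j/2` into this complement, i.e. to a vector of norm `8z²`,
which is never `2`.
-/

def orthogonalIn {n : Type*} [Fintype n] (L M : Set (n → ℝ)) : Set (n → ℝ) :=
  {v | v ∈ L ∧ ∀ a ∈ M, v ⬝ᵥ a = 0}

theorem image_orthogonalIn_subset {n : Type*} [Fintype n] {f : (n → ℝ) → n → ℝ}
    (hf : ∀ x y, f x ⬝ᵥ f y = x ⬝ᵥ y) (L M : Set (n → ℝ)) :
    f '' orthogonalIn L M ⊆ orthogonalIn (f '' L) (f '' M) := by
  rintro _ ⟨v, ⟨hvL, hvM⟩, rfl⟩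
  refine ⟨Set.mem_image_of_mem f hvL, ?_⟩
  rintro _ ⟨a, ha, rfl⟩
  rw [hf, hvM a ha]

theorem dotProduct_eq_zero_of_mem_span {n : Type*} [Fintype n] {S : Set (n → ℝ)}
    {v : n → ℝ} (hv : ∀ a ∈ S, v ⬝ᵥ a = 0) {a : n → ℝ} (ha : a ∈ Submodule.span ℤ S) :
    v ⬝ᵥ a = 0 := by
  induction ha using Submodule.span_induction with
  | mem x hx => exact hv x hx
  | zero => exact dotProduct_zero v
  | add x y _ _ hx hy => rw [dotProduct_add, hx, hy, add_zero]
  | smul z x _ hx => rw [← Int.cast_smul_eq_zsmul ℝ, dotProduct_smul, hx, smul_zero]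

theorem e_eq_single {N : ℕ} (k : Fin N) : e k = Pi.single k 1 := by
  ext j
  simp [e, Pi.single_apply]

theorem dotProduct_e {N : ℕ} (v : Fin N → ℝ) (k : Fin N) : v ⬝ᵥ e k = v k := by
  rw [e_eq_single, dotProduct_single_one]

def jSubTwoE0 : Fin 8 → ℝ := jv - (2 : ℝ) • e 0

theorem jSubTwoE0_apply (i : Fin 8) : jSubTwoE0 i = if i = 0 then -1 else 1 := by
  by_cases h : i = 0 <;> norm_num [jSubTwoE0, jv, e, h]

theorem jSubTwoE0_dotProduct_self : jSubTwoE0 ⬝ᵥ jSubTwoE0 = 8 := by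
  simp [dotProduct, Fin.sum_univ_eight, jSubTwoE0_apply]
  norm_num

theorem jSubTwoE0_dotProduct_A7'gens : ∀ a ∈ A7'gens, jSubTwoE0 ⬝ᵥ a = 0 := by
  rintro a (rfl | ⟨k, rfl⟩)
  · simp [dotProduct_sub, dotProduct_neg, dotProduct_e, jSubTwoE0_apply]
  · rw [dotProduct_sub, dotProduct_e, dotProduct_e, jSubTwoE0_apply, jSubTwoE0_apply,
      if_neg (Fin.ne_of_val_ne (by simp)), if_neg (Fin.ne_of_val_ne (by simp)), sub_self]

theorem orthogonal_A7'gens_iff (v : Fin 8 → ℝ) :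
    (∀ a ∈ A7'gens, v ⬝ᵥ a = 0) ↔ ∃ c : ℝ, v = c • jSubTwoE0 := by
  constructor
  · intro h
    have h01 : v 0 + v 1 = 0 := by
      have := h _ (Set.mem_insert _ _)
      rw [dotProduct_sub, dotProduct_neg, dotProduct_e, dotProduct_e] at this
      linarith
    have hstep (k : Fin 6) : v ⟨(k : ℕ) + 1, by omega⟩ = v ⟨(k : ℕ) + 2, by omega⟩ := by
      have := h _ (Set.mem_insert_of_mem _ ⟨k, rfl⟩)
      rw [dotProduct_sub, dotProduct_e, dotProduct_e] at this
      linarith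
    have := hstep 0; have := hstep 1; have := hstep 2
    have := hstep 3; have := hstep 4; have := hstep 5
    refine ⟨v 1, funext fun i => ?_⟩
    fin_cases i <;> simp [jSubTwoE0_apply] at * <;> linarith
  · rintro ⟨c, rfl⟩ a ha
    rw [smul_dotProduct, jSubTwoE0_dotProduct_A7'gens a ha, smul_zero]

theorem smul_jSubTwoE0_mem_E8set_iff (c : ℝ) :
    c • jSubTwoE0 ∈ E8set ↔ ∃ z : ℤ, c = z := by
  have hsum : ∑ i, (c • jSubTwoE0) i = 6 * c := by
    simp [Fin.sum_univ_eight, jSubTwoE0_apply]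
    ring
  constructor
  · rintro (⟨hint, -⟩ | ⟨w, ⟨hwint, k, hwsum⟩, hcw⟩)
    · obtain ⟨z, hz⟩ := hint 1
      exact ⟨z, by simpa [jSubTwoE0_apply] using hz⟩
    · -- `c ∈ 1/2 + ℤ` would make the coordinate sum `6c` odd, yet it is `4 + 2k`
      exfalso
      obtain ⟨z, hz⟩ := hwint 1
      have hc : c = 2⁻¹ + z := by
        simpa [jSubTwoE0_apply, jv, hz] using congrFun hcw 1
      have hsum' : ∑ i, (c • jSubTwoE0) i = 4 + 2 * k := by
        simp only [hcw, Pi.add_apply, Finset.sum_add_distrib, hwsum]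
        norm_num [jv]
      have : (6 * z : ℝ) = 1 + 2 * k := by linarith
      have : 6 * z = 1 + 2 * k := by exact_mod_cast this
      omega
  · rintro ⟨z, rfl⟩
    refine Or.inl ⟨fun i => ⟨if i = 0 then -z else z, ?_⟩, 3 * z, ?_⟩
    · by_cases h : i = 0 <;> simp [jSubTwoE0_apply, h]
    · rw [hsum]
      push_cast
      ring

theorem orthogonalIn_E8set_span_A7'gens :
    orthogonalIn E8set (Submodule.span ℤ A7'gens) = {v | ∃ z : ℤ, v = z • jSubTwoE0} := by
  ext v
  have hspan : (∀ a ∈ Submodule.span ℤ A7'gens, v ⬝ᵥ a = 0) ↔ ∀ a ∈ A7'gens, v ⬝ᵥ a = 0 :=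
    ⟨fun h a ha => h a (Submodule.subset_span ha), dotProduct_eq_zero_of_mem_span⟩
  simp only [orthogonalIn, Set.mem_ofPred_eq, SetLike.mem_coe, hspan, orthogonal_A7'gens_iff]
  constructor
  · rintro ⟨hE, c, rfl⟩
    obtain ⟨z, rfl⟩ := (smul_jSubTwoE0_mem_E8set_iff c).1 hE
    exact ⟨z, Int.cast_smul_eq_zsmul ℝ z _⟩
  · rintro ⟨z, rfl⟩
    rw [← Int.cast_smul_eq_zsmul ℝ]
    exact ⟨(smul_jSubTwoE0_mem_E8set_iff _).2 ⟨z, rfl⟩, z, rfl⟩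

theorem half_jv_mem_orthogonalIn_E8set_A7set : (2 : ℝ)⁻¹ • jv ∈ orthogonalIn E8set A7set := by
  refine ⟨Or.inr ⟨0, ⟨fun _ => ⟨0, by simp⟩, 0, by simp⟩, by simp⟩, fun x hx => ?_⟩
  simp [dotProduct, jv, ← Finset.mul_sum, hx.2]

theorem half_jv_dotProduct_self : ((2 : ℝ)⁻¹ • jv) ⬝ᵥ ((2 : ℝ)⁻¹ • jv) = 2 := by
  norm_num [dotProduct, jv]

/-- The orthogonal complement of `A_7' := ⟨-e_1 - e_2, e_2 - e_3, …, e_7 - e_8⟩`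
in `E_8` is generated by `j - 2e_1`, a vector of norm `8`; consequently no
automorphism of `E_8` (a linear bijection preserving inner products and mapping
`E_8` onto itself — in particular no element of the Weyl group) maps the standard
copy of `A_7` onto `A_7'`. -/
theorem stmt12 :
    {v : Fin 8 → ℝ | v ∈ E8set ∧ ∀ a ∈ Submodule.span ℤ A7'gens, v ⬝ᵥ a = 0} =
      {v : Fin 8 → ℝ | ∃ z : ℤ, v = z • (jv - (2 : ℝ) • e 0)} ∧
    (jv - (2 : ℝ) • e 0) ⬝ᵥ (jv - (2 : ℝ) • e 0) = 8 ∧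
    ¬ ∃ f : (Fin 8 → ℝ) ≃ₗ[ℝ] (Fin 8 → ℝ),
        (∀ x y, f x ⬝ᵥ f y = x ⬝ᵥ y) ∧ f '' E8set = E8set ∧
        f '' A7set = (Submodule.span ℤ A7'gens : Set (Fin 8 → ℝ)) := by
  refine ⟨orthogonalIn_E8set_span_A7'gens, jSubTwoE0_dotProduct_self, ?_⟩
  rintro ⟨f, hdot, hE8, hA7⟩
  have hmem : f ((2 : ℝ)⁻¹ • jv) ∈ orthogonalIn E8set (Submodule.span ℤ A7'gens) := by
    rw [← hE8, ← hA7]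
    exact image_orthogonalIn_subset hdot _ _ ⟨_, half_jv_mem_orthogonalIn_E8set_A7set, rfl⟩
  rw [orthogonalIn_E8set_span_A7'gens] at hmem
  obtain ⟨z, hz⟩ := hmem
  have hnorm := half_jv_dotProduct_self
  rw [← hdot, hz, ← Int.cast_smul_eq_zsmul ℝ, smul_dotProduct, dotProduct_smul,
    jSubTwoE0_dotProduct_self, smul_eq_mul, smul_eq_mul] at hnorm
  have : 4 * z ^ 2 = 1 := by exact_mod_cast (by linarith : (4 * z ^ 2 : ℝ) = 1)
  omega
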